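/- There exists a constant C > 0, depending only on n, α and sup_{x∈[0,1]} max_{i,j} |a_{ij}(x)| (in particular independent of ε_1, …, ε_n), such that for every continuous f : [0,1] → ℝⁿ and every twice continuously differentiable u : [0,1] → ℝⁿ satisfying Lu = f on (0,1), the following holds for each i, every x ∈ [0,1] and k = 0, 1, 2: |u_i^{(k)}(x)| ≤ C · ε_i^{−k/2} · (‖u(0)‖ + ‖u(1)‖ + ‖f‖). -/

import Mathlib

/-!
Maximum principle: `A(x)` is diagonally dominant with nonpositive off-diagonal entries and row
sums at least `α`, so for `c = (1 + 1/α) (‖u(0)‖ + ‖u(1)‖ + ‖f‖)` the functions `c ± u` satisfy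
`L(c ± u) ≥ 0` and are nonnegative at the endpoints; at a negative interior minimum of some
component the second derivative is nonnegative and diagonal dominance forces `L(c ± u) < 0`.
Hence `|u| ≤ c`. The equation then gives `εᵢ |uᵢ''| ≤ n ‖A‖ c + ‖f‖`, and the interpolation
inequality `|g'| ≤ 2 sup |g| / h + h sup |g''|` with `h = √εᵢ / 2` bounds `uᵢ'`.
-/

noncomputable def vnorm (n : ℕ) (V : ℕ → ℝ) : ℝ := ⨆ i ∈ Finset.Icc 1 n, |V i|

noncomputable def Lop (n : ℕ) (ε : ℕ → ℝ) (A : ℝ → ℕ → ℕ → ℝ)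
    (ψ : ℝ → ℕ → ℝ) (x : ℝ) (i : ℕ) : ℝ :=
  -(ε i) * iteratedDeriv 2 (fun t => ψ t i) x + ∑ j ∈ Finset.Icc 1 n, A x i j * ψ x j

open Set

lemma le_vnorm {n i : ℕ} (V : ℕ → ℝ) (h1 : 1 ≤ i) (h2 : i ≤ n) : |V i| ≤ vnorm n V := by
  refine le_ciSup₂ (f := fun j (_ : j ∈ Finset.Icc 1 n) => |V j|) ?_ i (Finset.mem_Icc.2 ⟨h1, h2⟩)
  refine ((Finset.Icc 1 n).image (|V ·|)).bddAbove.mono ?_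
  rintro _ ⟨_, ⟨j, rfl⟩, ⟨hj, rfl⟩⟩
  exact Finset.mem_coe.2 (Finset.mem_image_of_mem _ hj)

lemma vnorm_nonneg (n : ℕ) (V : ℕ → ℝ) : 0 ≤ vnorm n V :=
  Real.iSup_nonneg fun _ => Real.iSup_nonneg fun _ => abs_nonneg _

lemma exists_abs_le_of_continuousOn {X ι : Type*} [TopologicalSpace X] {K : Set X}
    (hK : IsCompact K) (s : Finset ι) {F : ι → X → ℝ} (hF : ∀ p ∈ s, ContinuousOn (F p) K) :
    ∃ M, 0 ≤ M ∧ ∀ p ∈ s, ∀ x ∈ K, |F p x| ≤ M := by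
  obtain ⟨M, hM⟩ := hK.exists_bound_of_continuousOn (f := fun x => ∑ p ∈ s, |F p x|)
    (continuousOn_finsetSum _ fun p hp => (hF p hp).abs)
  refine ⟨max M 0, le_max_right _ _, fun p hp x hx => ?_⟩
  calc |F p x| ≤ ∑ q ∈ s, |F q x| :=
        Finset.single_le_sum (f := fun q => |F q x|) (fun _ _ => abs_nonneg _) hp
    _ ≤ ‖∑ q ∈ s, |F q x|‖ := Real.le_norm_self _
    _ ≤ max M 0 := (hM x hx).trans (le_max_left _ _)

lemma iteratedDeriv_two_eq_deriv_deriv (g : ℝ → ℝ) : iteratedDeriv 2 g = deriv (deriv g) := by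
  rw [iteratedDeriv_succ, iteratedDeriv_one]

lemma IsLocalMin.deriv_deriv_nonneg {g : ℝ → ℝ} {x : ℝ} (h : IsLocalMin g x)
    (hc : ContinuousAt g x) : 0 ≤ deriv (deriv g) x := by
  by_contra! hneg
  -- The second-derivative test makes `x` a local maximum as well, so `g` is locally constant.
  have hconst : g =ᶠ[nhds x] fun _ => g x :=
    (h.and (isLocalMax_of_deriv_deriv_neg hneg h.deriv_eq_zero hc)).mono
      fun y hy => le_antisymm hy.2 hy.1
  have := hconst.deriv.deriv_eq
  simp only [deriv_const'] at this
  linarith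

lemma abs_deriv_mul_abs_sub_le {g : ℝ → ℝ} (hg : ContDiff ℝ 2 g) {M₀ M₂ : ℝ}
    (hb₀ : ∀ t ∈ Icc (0:ℝ) 1, |g t| ≤ M₀) (hb₂ : ∀ t ∈ Icc (0:ℝ) 1, |iteratedDeriv 2 g t| ≤ M₂)
    {x y : ℝ} (hx : x ∈ Icc (0:ℝ) 1) (hy : y ∈ Icc (0:ℝ) 1) :
    |deriv g x| * |y - x| ≤ 2 * M₀ + M₂ * |y - x| ^ 2 := by
  have hg₁ : Differentiable ℝ g := hg.differentiable two_ne_zero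
  have hg₂ : Differentiable ℝ (deriv g) := by
    simpa using hg.differentiable_iteratedDeriv 1 (by norm_num)
  have hseg : uIcc x y ⊆ Icc 0 1 := uIcc_subset_Icc hx hy
  have hderiv : ∀ t ∈ uIcc x y, ‖deriv g t - deriv g x‖ ≤ M₂ * |y - x| := by
    intro t ht
    have := (convex_Icc (0:ℝ) 1).norm_image_sub_le_of_norm_deriv_le
      (fun s _ => hg₂ s) (fun s hs => by simpa [iteratedDeriv_two_eq_deriv_deriv] using hb₂ s hs)
      hx (hseg ht)
    exact this.trans (mul_le_mul_of_nonneg_left (abs_sub_left_of_mem_uIcc ht)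
      ((abs_nonneg _).trans (hb₂ x hx)))
  -- Mean value inequality for the Taylor remainder `g t - g' x * t`.
  have hremainder := (convex_uIcc x y).norm_image_sub_le_of_norm_hasDerivWithin_le
    (f := fun t => g t - deriv g x * t)
    (fun t _ => ((hg₁ t).hasDerivAt.sub ((hasDerivAt_id t).const_mul (deriv g x))).hasDerivWithinAt
      |>.congr_deriv (by simp)) hderiv left_mem_uIcc right_mem_uIcc
  simp only [Real.norm_eq_abs] at hremainder
  calc |deriv g x| * |y - x| = |deriv g x * (y - x)| := (abs_mul _ _).symm
    _ ≤ |g y| + |g x| + |g y - deriv g x * y - (g x - deriv g x * x)| := by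
        have := abs_sub (g y) (g x)
        have := abs_sub (g y - g x) (g y - deriv g x * y - (g x - deriv g x * x))
        rw [show g y - g x - (g y - deriv g x * y - (g x - deriv g x * x)) = deriv g x * (y - x)
          by ring] at this
        linarith
    _ ≤ 2 * M₀ + M₂ * |y - x| ^ 2 := by
        nlinarith [hb₀ x hx, hb₀ y hy]

lemma abs_deriv_le_of_abs_le {g : ℝ → ℝ} (hg : ContDiff ℝ 2 g) {M₀ M₂ h : ℝ}
    (hb₀ : ∀ t ∈ Icc (0:ℝ) 1, |g t| ≤ M₀) (hb₂ : ∀ t ∈ Icc (0:ℝ) 1, |iteratedDeriv 2 g t| ≤ M₂)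
    (hh : 0 < h) (hh₂ : h ≤ 1 / 2) {x : ℝ} (hx : x ∈ Icc (0:ℝ) 1) :
    |deriv g x| ≤ 2 * M₀ / h + h * M₂ := by
  obtain ⟨y, hy, hyx⟩ : ∃ y ∈ Icc (0:ℝ) 1, |y - x| = h := by
    rcases le_or_gt x (1 / 2) with hx₂ | hx₂
    · exact ⟨x + h, ⟨by linarith [hx.1], by linarith⟩, by simp [hh.le]⟩
    · exact ⟨x - h, ⟨by linarith, by linarith [hx.2]⟩, by simp [abs_of_pos hh]⟩
  have := abs_deriv_mul_abs_sub_le hg hb₀ hb₂ hx hy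
  rw [hyx] at this
  rw [div_add' _ _ _ hh.ne', le_div_iff₀ hh]
  nlinarith

lemma abs_iteratedDeriv_le_of_abs_le {g : ℝ → ℝ} (hg : ContDiff ℝ 2 g) {e c K : ℝ}
    (he : 0 < e) (he₁ : e ≤ 1) (hb₀ : ∀ t ∈ Icc (0:ℝ) 1, |g t| ≤ c)
    (hb₂ : ∀ t ∈ Icc (0:ℝ) 1, |iteratedDeriv 2 g t| ≤ K / e) {k : ℕ} (hk : k ≤ 2)
    {x : ℝ} (hx : x ∈ Icc (0:ℝ) 1) :
    |iteratedDeriv k g x| ≤ (4 * c + K) * e ^ (-(k : ℝ) / 2) := by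
  have hc : 0 ≤ c := (abs_nonneg _).trans (hb₀ x hx)
  have hK : 0 ≤ K := by
    have := mul_nonneg ((abs_nonneg _).trans (hb₂ x hx)) he.le
    rwa [div_mul_cancel₀ _ he.ne'] at this
  interval_cases k
  · simpa using (hb₀ x hx).trans (by linarith)
  · have hs : 0 < √e := Real.sqrt_pos.2 he
    have hs₁ : √e ≤ 1 := Real.sqrt_le_one.2 he₁
    rw [show -((1 : ℕ) : ℝ) / 2 = -(1 / 2) by norm_num, Real.rpow_neg he.le,
      ← Real.sqrt_eq_rpow, iteratedDeriv_one]
    calc |deriv g x| ≤ 2 * c / (√e / 2) + √e / 2 * (K / e) :=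
          abs_deriv_le_of_abs_le hg hb₀ hb₂ (half_pos hs) (by linarith) hx
      _ = (4 * c + K / 2) * (√e)⁻¹ := by field_simp; rw [Real.sq_sqrt he.le]; ring
      _ ≤ (4 * c + K) * (√e)⁻¹ := by gcongr; linarith
  · rw [show -((2 : ℕ) : ℝ) / 2 = -1 by norm_num, Real.rpow_neg_one, ← div_eq_mul_inv]
    exact (hb₂ x hx).trans (div_le_div_of_nonneg_right (by linarith) he.le)

lemma sum_mul_neg_of_diagDominant {ι : Type*} [DecidableEq ι] {s : Finset ι} {i : ι}
    (hi : i ∈ s) {a w : ι → ℝ} (hoff : ∀ j ∈ s, j ≠ i → a j ≤ 0)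
    (hdom : ∑ j ∈ s.erase i, |a j| < a i) (hneg : w i < 0) (hmin : ∀ j ∈ s, w i ≤ w j) :
    ∑ j ∈ s, a j * w j < 0 :=
  calc ∑ j ∈ s, a j * w j = a i * w i + ∑ j ∈ s.erase i, a j * w j :=
        (Finset.add_sum_erase s _ hi).symm
    _ ≤ a i * w i + ∑ j ∈ s.erase i, |a j| * -w i := by
        gcongr a i * w i + ∑ j ∈ s.erase i, ?_ with j hj
        obtain ⟨hji, hj⟩ := Finset.mem_erase.1 hj
        rw [abs_of_nonpos (hoff j hj hji)]
        nlinarith [hoff j hj hji, hmin j hj]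
    _ = w i * (a i - ∑ j ∈ s.erase i, |a j|) := by rw [← Finset.sum_mul]; ring
    _ < 0 := mul_neg_of_neg_of_pos hneg (sub_pos.2 hdom)

lemma Lop_const_add_const_mul (n : ℕ) (ε : ℕ → ℝ) (A : ℝ → ℕ → ℕ → ℝ) (u : ℝ → ℕ → ℝ)
    (c s x : ℝ) (i : ℕ) :
    Lop n ε A (fun t j => c + s * u t j) x i =
      c * ∑ j ∈ Finset.Icc 1 n, A x i j + s * Lop n ε A u x i := by
  have hterm : ∀ j, A x i j * (c + s * u x j) = c * A x i j + s * (A x i j * u x j) :=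
    fun j => by ring
  simp only [Lop, iteratedDeriv_const_add two_pos, iteratedDeriv_const_mul_field, hterm,
    Finset.sum_add_distrib, ← Finset.mul_sum]
  ring

lemma nonneg_of_Lop_nonneg {n : ℕ} {ε : ℕ → ℝ} {A : ℝ → ℕ → ℕ → ℝ}
    (hAdiag : ∀ x ∈ Icc (0:ℝ) 1, ∀ i, 1 ≤ i → i ≤ n →
      ∑ j ∈ (Finset.Icc 1 n).erase i, |A x i j| < A x i i)
    (hAoff : ∀ x ∈ Icc (0:ℝ) 1, ∀ i j, 1 ≤ i → i ≤ n → 1 ≤ j → j ≤ n → i ≠ j → A x i j ≤ 0)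
    (hε : ∀ i, 1 ≤ i → i ≤ n → 0 ≤ ε i) {v : ℝ → ℕ → ℝ}
    (hv : ∀ i, 1 ≤ i → i ≤ n → ContinuousOn (fun t => v t i) (Icc 0 1))
    (hL : ∀ y ∈ Ioo (0:ℝ) 1, ∀ i, 1 ≤ i → i ≤ n → 0 ≤ Lop n ε A v y i)
    (h0 : ∀ i, 1 ≤ i → i ≤ n → 0 ≤ v 0 i) (h1 : ∀ i, 1 ≤ i → i ≤ n → 0 ≤ v 1 i)
    {x : ℝ} (hx : x ∈ Icc (0:ℝ) 1) {i : ℕ} (hi1 : 1 ≤ i) (hin : i ≤ n) : 0 ≤ v x i := by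
  choose! z hz hzmin using fun j (hj : j ∈ Finset.Icc 1 n) =>
    isCompact_Icc.exists_isMinOn (nonempty_Icc.2 zero_le_one)
      (hv j (Finset.mem_Icc.1 hj).1 (Finset.mem_Icc.1 hj).2)
  obtain ⟨k, hk, hkmin⟩ := (Finset.Icc 1 n).exists_min_image (fun j => v (z j) j)
    ⟨i, Finset.mem_Icc.2 ⟨hi1, hin⟩⟩
  obtain ⟨hk1, hkn⟩ := Finset.mem_Icc.1 hk
  have hglob : ∀ j ∈ Finset.Icc 1 n, ∀ y ∈ Icc (0:ℝ) 1, v (z k) k ≤ v y j :=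
    fun j hj y hy => (hkmin j hj).trans (hzmin j hj hy)
  refine le_trans ?_ (hglob i (Finset.mem_Icc.2 ⟨hi1, hin⟩) x hx)
  by_contra! hneg
  have hzk : z k ∈ Ioo (0:ℝ) 1 := by
    obtain ⟨hz0, hz1⟩ := hz k hk
    refine ⟨hz0.lt_of_ne ?_, hz1.lt_of_ne ?_⟩ <;> rintro h
    · rw [← h] at hneg; linarith [h0 k hk1 hkn]
    · rw [h] at hneg; linarith [h1 k hk1 hkn]
  have hzk_nhds : Icc (0:ℝ) 1 ∈ nhds (z k) := Icc_mem_nhds hzk.1 hzk.2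
  have hconvex : 0 ≤ iteratedDeriv 2 (fun t => v t k) (z k) := by
    rw [iteratedDeriv_two_eq_deriv_deriv]
    exact ((hzmin k hk).isLocalMin hzk_nhds).deriv_deriv_nonneg
      ((hv k hk1 hkn).continuousAt hzk_nhds)
  have hrow : ∑ j ∈ Finset.Icc 1 n, A (z k) k j * v (z k) j < 0 :=
    sum_mul_neg_of_diagDominant hk
      (fun j hj hjk => hAoff _ (hz k hk) k j hk1 hkn (Finset.mem_Icc.1 hj).1
        (Finset.mem_Icc.1 hj).2 (Ne.symm hjk))
      (hAdiag _ (hz k hk) k hk1 hkn) hneg (fun j hj => hglob j hj _ (hz k hk))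
  have hLk := hL (z k) hzk k hk1 hkn
  rw [Lop] at hLk
  nlinarith [mul_nonneg (hε k hk1 hkn) hconvex]

lemma abs_le_of_abs_Lop_le {n : ℕ} {ε : ℕ → ℝ} {A : ℝ → ℕ → ℕ → ℝ} {α : ℝ}
    (hAdiag : ∀ x ∈ Icc (0:ℝ) 1, ∀ i, 1 ≤ i → i ≤ n →
      ∑ j ∈ (Finset.Icc 1 n).erase i, |A x i j| < A x i i)
    (hAoff : ∀ x ∈ Icc (0:ℝ) 1, ∀ i j, 1 ≤ i → i ≤ n → 1 ≤ j → j ≤ n → i ≠ j → A x i j ≤ 0)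
    (hα : ∀ x ∈ Icc (0:ℝ) 1, ∀ i, 1 ≤ i → i ≤ n → α ≤ ∑ j ∈ Finset.Icc 1 n, A x i j)
    (hε : ∀ i, 1 ≤ i → i ≤ n → 0 ≤ ε i) {u : ℝ → ℕ → ℝ}
    (hu : ∀ i, 1 ≤ i → i ≤ n → ContinuousOn (fun t => u t i) (Icc 0 1)) {c : ℝ}
    (hL : ∀ y ∈ Ioo (0:ℝ) 1, ∀ i, 1 ≤ i → i ≤ n → |Lop n ε A u y i| ≤ α * c)
    (h0 : ∀ i, 1 ≤ i → i ≤ n → |u 0 i| ≤ c) (h1 : ∀ i, 1 ≤ i → i ≤ n → |u 1 i| ≤ c)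
    {x : ℝ} (hx : x ∈ Icc (0:ℝ) 1) {i : ℕ} (hi1 : 1 ≤ i) (hin : i ≤ n) : |u x i| ≤ c := by
  have hc : 0 ≤ c := (abs_nonneg _).trans (h0 i hi1 hin)
  have hbarrier : ∀ s : ℝ, |s| = 1 → 0 ≤ c + s * u x i := by
    intro s hs
    have hshift : ∀ r, |r| ≤ c → 0 ≤ c + s * r := fun r hr => by
      have := neg_abs_le (s * r)
      rw [abs_mul, hs, one_mul] at this
      linarith
    refine nonneg_of_Lop_nonneg (v := fun t j => c + s * u t j) hAdiag hAoff hε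
      (fun j hj1 hjn => continuousOn_const.add (continuousOn_const.mul (hu j hj1 hjn)))
      (fun y hy j hj1 hjn => ?_) (fun j hj1 hjn => hshift _ (h0 j hj1 hjn))
      (fun j hj1 hjn => hshift _ (h1 j hj1 hjn)) hx hi1 hin
    have hrow := mul_le_mul_of_nonneg_left (hα y (Ioo_subset_Icc_self hy) j hj1 hjn) hc
    have := neg_abs_le (s * Lop n ε A u y j)
    rw [abs_mul, hs, one_mul] at this
    rw [Lop_const_add_const_mul]
    linarith [hL y hy j hj1 hjn]
  have := hbarrier 1 (by simp)
  have := hbarrier (-1) (by simp)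
  rw [abs_le]
  constructor <;> linarith

lemma abs_le_of_Lop_eq {n : ℕ} {ε : ℕ → ℝ} {A : ℝ → ℕ → ℕ → ℝ} {α : ℝ}
    (hAdiag : ∀ x ∈ Icc (0:ℝ) 1, ∀ i, 1 ≤ i → i ≤ n →
      ∑ j ∈ (Finset.Icc 1 n).erase i, |A x i j| < A x i i)
    (hAoff : ∀ x ∈ Icc (0:ℝ) 1, ∀ i j, 1 ≤ i → i ≤ n → 1 ≤ j → j ≤ n → i ≠ j → A x i j ≤ 0)
    (hα0 : 0 < α) (hα : ∀ x ∈ Icc (0:ℝ) 1, ∀ i, 1 ≤ i → i ≤ n → α ≤ ∑ j ∈ Finset.Icc 1 n, A x i j)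
    (hε : ∀ i, 1 ≤ i → i ≤ n → 0 ≤ ε i) {u f : ℝ → ℕ → ℝ}
    (hu : ∀ i, 1 ≤ i → i ≤ n → ContinuousOn (fun t => u t i) (Icc 0 1))
    (hLu : ∀ y ∈ Ioo (0:ℝ) 1, ∀ i, 1 ≤ i → i ≤ n → Lop n ε A u y i = f y i) {Mf : ℝ}
    (hf : ∀ y ∈ Ioo (0:ℝ) 1, ∀ i, 1 ≤ i → i ≤ n → |f y i| ≤ Mf)
    {x : ℝ} (hx : x ∈ Icc (0:ℝ) 1) {i : ℕ} (hi1 : 1 ≤ i) (hin : i ≤ n) :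
    |u x i| ≤ (1 + α⁻¹) * (vnorm n (u 0) + vnorm n (u 1) + Mf) := by
  have hMf : 0 ≤ Mf := (abs_nonneg _).trans (hf (1 / 2) ⟨by norm_num, by norm_num⟩ i hi1 hin)
  have hB₀ := vnorm_nonneg n (u 0)
  have hB₁ := vnorm_nonneg n (u 1)
  set B := vnorm n (u 0) + vnorm n (u 1) + Mf
  have hBα : B ≤ α * ((1 + α⁻¹) * B) := by
    have : α * ((1 + α⁻¹) * B) = α * B + B := by field_simp
    nlinarith
  have hBc : B ≤ (1 + α⁻¹) * B := by nlinarith [inv_pos.2 hα0]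
  refine abs_le_of_abs_Lop_le hAdiag hAoff hα hε hu (fun y hy j hj1 hjn => ?_)
    (fun j hj1 hjn => ?_) (fun j hj1 hjn => ?_) hx hi1 hin
  · rw [hLu y hy j hj1 hjn]
    linarith [hf y hy j hj1 hjn]
  · linarith [le_vnorm (u 0) hj1 hjn]
  · linarith [le_vnorm (u 1) hj1 hjn]

lemma abs_iteratedDeriv_two_le_of_Lop_eq {n : ℕ} {ε : ℕ → ℝ} {A : ℝ → ℕ → ℕ → ℝ}
    {u f : ℝ → ℕ → ℝ} {i : ℕ} (hε : 0 < ε i) (hu : ContDiff ℝ 2 (fun t => u t i))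
    (hLu : ∀ y ∈ Ioo (0:ℝ) 1, Lop n ε A u y i = f y i) {M c Mf : ℝ}
    (hA : ∀ y ∈ Icc (0:ℝ) 1, ∀ j, 1 ≤ j → j ≤ n → |A y i j| ≤ M)
    (hu₀ : ∀ y ∈ Icc (0:ℝ) 1, ∀ j, 1 ≤ j → j ≤ n → |u y j| ≤ c)
    (hf : ∀ y ∈ Icc (0:ℝ) 1, |f y i| ≤ Mf) {x : ℝ} (hx : x ∈ Icc (0:ℝ) 1) :
    |iteratedDeriv 2 (fun t => u t i) x| ≤ (n * M * c + Mf) / ε i := by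
  have hcont : Continuous fun y => |ε i * iteratedDeriv 2 (fun t => u t i) y| :=
    (continuous_const.mul (hu.continuous_iteratedDeriv 2 le_rfl)).abs
  have hinterior : ∀ y ∈ Ioo (0:ℝ) 1,
      |ε i * iteratedDeriv 2 (fun t => u t i) y| ≤ n * M * c + Mf := by
    intro y hy
    have hy' := Ioo_subset_Icc_self hy
    have hsum : |∑ j ∈ Finset.Icc 1 n, A y i j * u y j| ≤ n * M * c :=
      calc |∑ j ∈ Finset.Icc 1 n, A y i j * u y j|
          ≤ ∑ j ∈ Finset.Icc 1 n, |A y i j * u y j| := Finset.abs_sum_le_sum_abs _ _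
        _ ≤ ∑ _j ∈ Finset.Icc 1 n, M * c := Finset.sum_le_sum fun j hj => by
            obtain ⟨hj1, hjn⟩ := Finset.mem_Icc.1 hj
            rw [abs_mul]
            exact mul_le_mul (hA y hy' j hj1 hjn) (hu₀ y hy' j hj1 hjn) (abs_nonneg _)
              ((abs_nonneg _).trans (hA y hy' j hj1 hjn))
        _ = n * M * c := by simp [mul_assoc]
    have heq : ε i * iteratedDeriv 2 (fun t => u t i) y =
        ∑ j ∈ Finset.Icc 1 n, A y i j * u y j - f y i := by
      have := hLu y hy
      rw [Lop] at this
      linarith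
    rw [heq]
    linarith [abs_sub (∑ j ∈ Finset.Icc 1 n, A y i j * u y j) (f y i), hf y hy']
  have hclosure : x ∈ closure (Ioo (0:ℝ) 1) := by rwa [closure_Ioo zero_ne_one]
  have := hcont.continuousWithinAt.closure_le hclosure continuousWithinAt_const hinterior
  rw [abs_mul, abs_of_pos hε] at this
  rw [le_div_iff₀ hε]
  linarith

theorem stmt2_general
    (n : ℕ)
    (A : ℝ → ℕ → ℕ → ℝ)
    (hAc : ∀ i j, 1 ≤ i → i ≤ n → 1 ≤ j → j ≤ n →
      ContinuousOn (fun x => A x i j) (Set.Icc 0 1))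
    (hAdiag : ∀ x ∈ Set.Icc (0:ℝ) 1, ∀ i, 1 ≤ i → i ≤ n →
      ∑ j ∈ (Finset.Icc 1 n).erase i, |A x i j| < A x i i)
    (hAoff : ∀ x ∈ Set.Icc (0:ℝ) 1, ∀ i j, 1 ≤ i → i ≤ n → 1 ≤ j → j ≤ n → i ≠ j → A x i j ≤ 0)
    (α : ℝ) (hα0 : 0 < α)
    (hα : ∀ x ∈ Set.Icc (0:ℝ) 1, ∀ i, 1 ≤ i → i ≤ n → α < ∑ j ∈ Finset.Icc 1 n, A x i j)
    :
    ∃ C > 0,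
      ∀ ε : ℕ → ℝ,
      (∀ i, 1 ≤ i → i ≤ n → 0 < ε i) →
      (∀ i, 1 ≤ i → i ≤ n → ε i ≤ 1) →
      (∀ i j, 1 ≤ i → i < j → j ≤ n → ε i < ε j) →
      ∀ f u : ℝ → ℕ → ℝ,
      (∀ i, 1 ≤ i → i ≤ n → ContinuousOn (fun x => f x i) (Set.Icc 0 1)) →
      (∀ i, 1 ≤ i → i ≤ n → ContDiff ℝ 2 (fun t => u t i)) →
      (∀ y ∈ Set.Ioo (0:ℝ) 1, ∀ i, 1 ≤ i → i ≤ n → Lop n ε A u y i = f y i) →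
      ∀ Mf : ℝ, (∀ y ∈ Set.Icc (0:ℝ) 1, ∀ i, 1 ≤ i → i ≤ n → |f y i| ≤ Mf) →
      ∀ k : ℕ, k ≤ 2 → ∀ i, 1 ≤ i → i ≤ n → ∀ x ∈ Set.Icc (0:ℝ) 1,
        |iteratedDeriv k (fun t => u t i) x| ≤
          C * ε i ^ (-(k : ℝ) / 2) * (vnorm n (u 0) + vnorm n (u 1) + Mf) := by
  obtain ⟨M, hM0, hM⟩ := exists_abs_le_of_continuousOn isCompact_Icc
    (Finset.Icc 1 n ×ˢ Finset.Icc 1 n) (F := fun p x => A x p.1 p.2) fun p hp => by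
      simp only [Finset.mem_product, Finset.mem_Icc] at hp
      exact hAc p.1 p.2 hp.1.1 hp.1.2 hp.2.1 hp.2.2
  set C₀ := 1 + α⁻¹
  refine ⟨4 * C₀ + (n * M * C₀ + 1), by positivity, ?_⟩
  intro ε hε hε₁ _ f u _ hu hLu Mf hf k hk i hi1 hin x hx
  set B := vnorm n (u 0) + vnorm n (u 1) + Mf
  have hu₀ : ∀ y ∈ Icc (0:ℝ) 1, ∀ j, 1 ≤ j → j ≤ n → |u y j| ≤ C₀ * B :=
    fun y hy j hj1 hjn => abs_le_of_Lop_eq hAdiag hAoff hα0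
      (fun x hx i hi1 hin => (hα x hx i hi1 hin).le) (fun j hj1 hjn => (hε j hj1 hjn).le)
      (fun j hj1 hjn => (hu j hj1 hjn).continuous.continuousOn) hLu
      (fun y hy => hf y (Ioo_subset_Icc_self hy)) hy hj1 hjn
  have hMf : Mf ≤ B := by linarith [vnorm_nonneg n (u 0), vnorm_nonneg n (u 1)]
  have hu₂ : ∀ y ∈ Icc (0:ℝ) 1, |iteratedDeriv 2 (fun t => u t i) y| ≤
      (n * M * C₀ + 1) * B / ε i := fun y hy =>
    (abs_iteratedDeriv_two_le_of_Lop_eq (hε i hi1 hin) (hu i hi1 hin)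
      (fun y hy => hLu y hy i hi1 hin) (fun y hy j hj1 hjn => hM (i, j) (by simp [*]) y hy)
      hu₀ (fun y hy => hf y hy i hi1 hin) hy).trans
      (div_le_div_of_nonneg_right (by linarith) (hε i hi1 hin).le)
  have := abs_iteratedDeriv_le_of_abs_le (hu i hi1 hin) (hε i hi1 hin) (hε₁ i hi1 hin)
    (fun t ht => hu₀ t ht i hi1 hin) hu₂ hk hx
  linarith

theorem stmt2
    (n : ℕ) (hn : 1 ≤ n)
    (A : ℝ → ℕ → ℕ → ℝ)
    (hAc : ∀ i j, 1 ≤ i → i ≤ n → 1 ≤ j → j ≤ n →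
      ContinuousOn (fun x => A x i j) (Set.Icc 0 1))
    (hAdiag : ∀ x ∈ Set.Icc (0:ℝ) 1, ∀ i, 1 ≤ i → i ≤ n →
      ∑ j ∈ (Finset.Icc 1 n).erase i, |A x i j| < A x i i)
    (hAoff : ∀ x ∈ Set.Icc (0:ℝ) 1, ∀ i j, 1 ≤ i → i ≤ n → 1 ≤ j → j ≤ n → i ≠ j → A x i j ≤ 0)
    (α : ℝ) (hα0 : 0 < α)
    (hα : ∀ x ∈ Set.Icc (0:ℝ) 1, ∀ i, 1 ≤ i → i ≤ n → α < ∑ j ∈ Finset.Icc 1 n, A x i j)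
    :
    ∃ C > 0,
      ∀ ε : ℕ → ℝ,
      (∀ i, 1 ≤ i → i ≤ n → 0 < ε i) →
      (∀ i, 1 ≤ i → i ≤ n → ε i ≤ 1) →
      (∀ i j, 1 ≤ i → i < j → j ≤ n → ε i < ε j) →
      ∀ f u : ℝ → ℕ → ℝ,
      (∀ i, 1 ≤ i → i ≤ n → ContinuousOn (fun x => f x i) (Set.Icc 0 1)) →
      (∀ i, 1 ≤ i → i ≤ n → ContDiff ℝ 2 (fun t => u t i)) →
      (∀ y ∈ Set.Ioo (0:ℝ) 1, ∀ i, 1 ≤ i → i ≤ n → Lop n ε A u y i = f y i) →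
      ∀ Mf : ℝ, (∀ y ∈ Set.Icc (0:ℝ) 1, ∀ i, 1 ≤ i → i ≤ n → |f y i| ≤ Mf) →
      ∀ k : ℕ, k ≤ 2 → ∀ i, 1 ≤ i → i ≤ n → ∀ x ∈ Set.Icc (0:ℝ) 1,
        |iteratedDeriv k (fun t => u t i) x| ≤
          C * ε i ^ (-(k : ℝ) / 2) * (vnorm n (u 0) + vnorm n (u 1) + Mf) :=
  stmt2_general n A hAc hAdiag hAoff α hα0 hα
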